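/- For all i ≥ 4, W_i = W_{i-2} · (2 ⊕ W_{i-3})² · (4 ⊕ W_{i-4}). (For example, W_5 = 01223 · 234 · 234 · 45.) -/

import Mathlib

/-- The morphism `phi` on the alphabet `ℕ`: `phi (2i) = (2i)(2i+1)` and `phi (2i+1) = (2i+2)`. -/
def phi (a : ℕ) : List ℕ := if a % 2 = 0 then [a, a + 1] else [a + 1]

/-- The finite ZWW words: `W n = phi^n(0)`, so `W 0 = 0`, `W 1 = 01`, `W 2 = 012`, `W 3 = 01223`. -/
def W (n : ℕ) : List ℕ := (fun w => w.flatMap phi)^[n] [0]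

/-! Since `phi` commutes with every even shift `m ⊕ ·`, applying it to
`W 2 = W 1 · (2 ⊕ W 0)` propagates `W (n + 2) = W (n + 1) · (2 ⊕ W n)` to all `n`.
Unfolding this recursion three times gives the factorisation. -/

lemma phi_add_of_even {m : ℕ} (hm : Even m) (a : ℕ) :
    phi (a + m) = (phi a).map (· + m) := by
  have hpar : (a + m) % 2 = a % 2 := by
    obtain ⟨k, rfl⟩ := hm
    omega
  unfold phi
  rw [hpar]
  split_ifs <;> simp [Nat.add_right_comm]

lemma flatMap_phi_map_add_of_even {m : ℕ} (hm : Even m) (w : List ℕ) :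
    (w.map (· + m)).flatMap phi = (w.flatMap phi).map (· + m) := by
  simp [List.flatMap_map, List.map_flatMap, phi_add_of_even hm]

lemma W_succ (n : ℕ) : W (n + 1) = (W n).flatMap phi :=
  Function.iterate_succ_apply' _ _ _

lemma W_add_two (n : ℕ) : W (n + 2) = W (n + 1) ++ (W n).map (· + 2) := by
  induction n with
  | zero => rfl
  | succ n ih =>
    rw [W_succ (n + 2), ih, List.flatMap_append, flatMap_phi_map_add_of_even even_two,
      ← W_succ, ← W_succ, ih]

/-- For all `i ≥ 4`, `W i = W (i-2) · (2 ⊕ W (i-3))² · (4 ⊕ W (i-4))`. -/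
theorem zww_square_factorisation : ∀ i : ℕ, 4 ≤ i →
    W i = W (i - 2) ++ ((W (i - 3)).map (· + 2) ++ (W (i - 3)).map (· + 2))
      ++ (W (i - 4)).map (· + 4) := by
  intro i hi
  obtain ⟨n, rfl⟩ : ∃ n, i = n + 4 := ⟨i - 4, by omega⟩
  rw [show n + 4 - 2 = n + 2 by omega, show n + 4 - 3 = n + 1 by omega, Nat.add_sub_cancel,
    W_add_two (n + 2), W_add_two (n + 1), W_add_two n]
  simp [List.map_map, Function.comp_def, add_assoc]
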